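/- arXiv:2510.20032 — 3 statements merged into one kernel-verified Lean document; each statement's English description precedes it below -/
import Mathlib

section
/- lim_{t→0} ∫_{ℝ^k} ((g(x,t) − g(x,0))/t) · 1_{S_t}(x) dx = ∫_{ℝ^k} g'(x,0) · 1_{S_0}(x) dx, where g'(x,0) denotes the derivative of t ↦ g(x,t) at t = 0. -/
/-!
Since `t ↦ g(x,t)` is differentiable with `|∂g/∂t(x,·)| ≤ K(x)` on a neighbourhood of `0`,
the mean value theorem bounds the difference quotients `(g(x,t) − g(x,0))/t` by `K(x)`
uniformly for small `t`; they converge to `g'(x,0)`, while the indicators of `S_t` are bounded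
by `1` and converge to that of `S_0`. Dominated convergence with the integrable majorant `K`
gives the limit.
-/

open MeasureTheory Filter Topology Set

lemma norm_slope_le_of_norm_deriv_le {E : Type*} [NormedAddCommGroup E] [NormedSpace ℝ E]
    {f : ℝ → E} {s : Set ℝ} {C a b : ℝ} (hs : Convex ℝ s)
    (hf : ∀ x ∈ s, DifferentiableAt ℝ f x) (bound : ∀ x ∈ s, ‖deriv f x‖ ≤ C)
    (ha : a ∈ s) (hb : b ∈ s) : ‖slope f a b‖ ≤ C := by
  rcases eq_or_ne b a with rfl | hab
  · simpa using (norm_nonneg _).trans (bound _ hb)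
  have hdiff : ‖f b - f a‖ ≤ C * ‖b - a‖ := hs.norm_image_sub_le_of_norm_deriv_le hf bound ha hb
  have hpos : 0 < ‖b - a‖ := norm_pos_iff.mpr (sub_ne_zero.mpr hab)
  rw [slope_def_module, norm_smul, norm_inv, inv_mul_le_iff₀ hpos, mul_comm]
  exact hdiff

lemma tendsto_integral_smul_slope_of_dominated {α E : Type*} [MeasurableSpace α]
    {μ : Measure α} [NormedAddCommGroup E] [NormedSpace ℝ E] [CompleteSpace E]
    {g : α → ℝ → E} {w : ℝ → α → ℝ} {w₀ : α → ℝ} {K : α → ℝ} {s : Set ℝ}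
    (hs : s ∈ 𝓝 0) (hs_conv : Convex ℝ s)
    (hg_meas : ∀ t ∈ s, AEStronglyMeasurable (fun x => g x t) μ)
    (hw_meas : ∀ t ∈ s, AEStronglyMeasurable (w t) μ) (hw_le : ∀ t x, ‖w t x‖ ≤ 1)
    (hK : Integrable K μ)
    (h_diff : ∀ᵐ x ∂μ, ∀ t ∈ s, DifferentiableAt ℝ (g x) t ∧ ‖deriv (g x) t‖ ≤ K x)
    (hw_lim : ∀ᵐ x ∂μ, Tendsto (fun t => w t x) (𝓝[≠] 0) (𝓝 (w₀ x))) :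
    Tendsto (fun t => ∫ x, w t x • slope (g x) 0 t ∂μ) (𝓝[≠] 0)
      (𝓝 (∫ x, w₀ x • deriv (g x) 0 ∂μ)) := by
  have h0s : (0 : ℝ) ∈ s := mem_of_mem_nhds hs
  have hs' : ∀ᶠ t in 𝓝[≠] (0 : ℝ), t ∈ s := eventually_nhdsWithin_of_eventually_nhds hs
  refine tendsto_integral_filter_of_dominated_convergence K ?_ ?_ hK ?_
  · filter_upwards [hs'] with t ht
    simp_rw [slope_def_module]
    exact (hw_meas t ht).smul (((hg_meas t ht).sub (hg_meas 0 h0s)).const_smul _)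
  · filter_upwards [hs'] with t ht
    filter_upwards [h_diff] with x hx
    have hslope : ‖slope (g x) 0 t‖ ≤ K x :=
      norm_slope_le_of_norm_deriv_le hs_conv (fun y hy => (hx y hy).1)
        (fun y hy => (hx y hy).2) h0s ht
    rw [norm_smul]
    exact (mul_le_of_le_one_left (norm_nonneg _) (hw_le t x)).trans hslope
  · filter_upwards [h_diff, hw_lim] with x hx hwx
    exact hwx.smul (hasDerivAt_iff_tendsto_slope.mp (hx 0 h0s).1.hasDerivAt)

theorem stmt4_general {k : ℕ}
    (g : EuclideanSpace ℝ (Fin k) → ℝ → ℝ)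
    (hg_meas : Measurable (Function.uncurry g))
    (N : Set ℝ) (hN : N ∈ nhds (0 : ℝ))
    (K : EuclideanSpace ℝ (Fin k) → ℝ) (hK : Integrable K)
    (h_diff : ∀ᵐ x, ∀ t ∈ N, DifferentiableAt ℝ (g x) t ∧ |deriv (g x) t| ≤ K x)
    (S : ℝ → Set (EuclideanSpace ℝ (Fin k)))
    (hS_meas : ∀ t ∈ N, MeasurableSet (S t))
    (hS_conv : ∀ᵐ x, Tendsto (fun t : ℝ => Set.indicator (S t) (fun _ => (1 : ℝ)) x)
        (nhds 0) (nhds (Set.indicator (S 0) (fun _ => (1 : ℝ)) x))) :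
    Tendsto
      (fun t : ℝ => ∫ x, ((g x t - g x 0) / t) * Set.indicator (S t) (fun _ => (1 : ℝ)) x)
      (nhdsWithin 0 {(0 : ℝ)}ᶜ)
      (nhds (∫ x, deriv (g x) 0 * Set.indicator (S 0) (fun _ => (1 : ℝ)) x)) := by
  obtain ⟨ε, hε, hball⟩ := Metric.mem_nhds_iff.mp hN
  have h := tendsto_integral_smul_slope_of_dominated (g := g) (K := K)
    (w := fun t => (S t).indicator fun _ => (1 : ℝ)) (Metric.ball_mem_nhds 0 hε)
    (convex_ball 0 ε) (fun t _ => hg_meas.of_uncurry_right.aestronglyMeasurable)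
    (fun t ht => (measurable_const.indicator (hS_meas t (hball ht))).aestronglyMeasurable)
    (fun t x => norm_indicator_le_norm_self _ _ |>.trans_eq norm_one) hK
    (by filter_upwards [h_diff] with x hx t ht using hx t (hball ht))
    (by filter_upwards [hS_conv] with x hx using hx.mono_left nhdsWithin_le_nhds)
  simpa only [smul_eq_mul, mul_comm, slope_fun_def_field, sub_zero] using h

/-- Term-1 convergence in the proof of the main differentiation theorem: the difference
quotients of `g` integrated over the moving domains `S_t` converge to the integral of the
derivative over `S_0`:
`lim_{t→0} ∫ ((g(x,t) − g(x,0))/t) 1_{S_t}(x) dx = ∫ g'(x,0) 1_{S_0}(x) dx`. -/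
theorem stmt4 {k : ℕ}
    (g : EuclideanSpace ℝ (Fin k) → ℝ → ℝ)
    (hg_meas : Measurable (Function.uncurry g))
    (N : Set ℝ) (hN : N ∈ nhds (0 : ℝ))
    (K : EuclideanSpace ℝ (Fin k) → ℝ) (hK : Integrable K)
    (h_diff : ∀ᵐ x, ∀ t ∈ N, DifferentiableAt ℝ (g x) t ∧ |deriv (g x) t| ≤ K x)
    (hg0 : Integrable (fun x => g x 0))
    (S : ℝ → Set (EuclideanSpace ℝ (Fin k)))
    (hS_meas : ∀ t ∈ N, MeasurableSet (S t))
    (hS_conv : ∀ᵐ x, Tendsto (fun t : ℝ => Set.indicator (S t) (fun _ => (1 : ℝ)) x)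
        (nhds 0) (nhds (Set.indicator (S 0) (fun _ => (1 : ℝ)) x))) :
    Tendsto
      (fun t : ℝ => ∫ x, ((g x t - g x 0) / t) * Set.indicator (S t) (fun _ => (1 : ℝ)) x)
      (nhdsWithin 0 {(0 : ℝ)}ᶜ)
      (nhds (∫ x, deriv (g x) 0 * Set.indicator (S 0) (fun _ => (1 : ℝ)) x)) :=
  stmt4_general g hg_meas N hN K hK h_diff S hS_meas hS_conv
end

section
/- For every bounded measurable function g : 𝒜 × 𝓡 × 𝓡' → ℝ, the inverse-weighting identity Σ_{a∈𝒜} E[m_a(R) μ_a(R,R') g(a, R, R')] = E[Y g(A, R, R')] holds. -/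
/-!
Condition on σ(A, R, R'): since g(A, R, R') is measurable for it, the pull-out property turns
E[Y g(A,R,R')] into E[m_A(R) g(A,R,R')]. Splitting over the value of A writes this as
Σ_a E[1{A=a} m_a(R) g(a,R,R')], and now m_a(R) g(a,R,R') is σ(R, R')-measurable, so conditioning
on σ(R, R') replaces 1{A=a} by μ_a(R,R').
-/

open scoped Classical

open MeasureTheory

theorem integral_mul_of_condExp_ae_eq {Ω : Type*} {m mΩ : MeasurableSpace Ω} {μ : Measure Ω}
    (hm : m ≤ mΩ) [SigmaFinite (μ.trim hm)] {f g g' : Ω → ℝ} (hf : StronglyMeasurable[m] f)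
    (hgf : Integrable (g * f) μ) (hg : Integrable g μ) (hg' : μ[g|m] =ᵐ[μ] g') :
    ∫ ω, g ω * f ω ∂μ = ∫ ω, g' ω * f ω ∂μ :=
  calc ∫ ω, g ω * f ω ∂μ = ∫ ω, (μ[g * f|m]) ω ∂μ := (integral_condExp hm).symm
    _ = ∫ ω, g' ω * f ω ∂μ := integral_congr_ae <| by
      filter_upwards [condExp_mul_of_stronglyMeasurable_right hf hgf hg, hg'] with ω h h'
      rw [h, Pi.mul_apply, h']

theorem integrable_boole_mul_of_integrable_diag {Ω ι : Type*} [MeasurableSpace Ω]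
    [MeasurableSpace ι] [MeasurableSingletonClass ι] {μ : Measure Ω} {A : Ω → ι}
    (hA : Measurable A) {F : ι → Ω → ℝ} (hF : Integrable (fun ω => F (A ω) ω) μ) (a : ι) :
    Integrable (fun ω => (if A ω = a then 1 else 0) * F a ω) μ := by
  refine (hF.indicator (hA (measurableSet_singleton a))).congr (.of_forall fun ω => ?_)
  by_cases hω : A ω = a <;> simp [hω]

theorem stmt7_general {Ω 𝒜 𝓡 𝓡' : Type*} [MeasurableSpace Ω]
    [Fintype 𝒜] [MeasurableSpace 𝒜] [MeasurableSingletonClass 𝒜]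
    [MeasurableSpace 𝓡] [MeasurableSpace 𝓡']
    (P : Measure Ω) [IsProbabilityMeasure P]
    (A : Ω → 𝒜) (R : Ω → 𝓡) (R' : Ω → 𝓡') (Y : Ω → ℝ)
    (hA : Measurable A) (hR : Measurable R) (hR' : Measurable R')
    (hY_int : Integrable Y P)
    (m : 𝒜 → 𝓡 → ℝ) (μa : 𝒜 → 𝓡 → 𝓡' → ℝ)
    (hm_meas : ∀ a, Measurable (m a))
    -- E[Y | σ(A,R,R')] = m_A(R) a.s. (this encodes E[Y|A,R] = m_A(R) together with
    -- conditional independence of Y and R' given (A,R))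
    (h_condY : P[Y | MeasurableSpace.comap (fun ω => (A ω, R ω, R' ω)) inferInstance]
        =ᵐ[P] fun ω => m (A ω) (R ω))
    -- E[1{A=a} | σ(R,R')] = μ_a(R,R') a.s.
    (h_condA : ∀ a : 𝒜,
        P[(fun ω => if A ω = a then (1 : ℝ) else 0) |
            MeasurableSpace.comap (fun ω => (R ω, R' ω)) inferInstance]
          =ᵐ[P] fun ω => μa a (R ω) (R' ω))
    -- a bounded measurable function g
    (g : 𝒜 → 𝓡 → 𝓡' → ℝ)
    (hg_meas : ∀ a, Measurable (fun q : 𝓡 × 𝓡' => g a q.1 q.2))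
    (Cg : ℝ) (hg_bdd : ∀ a r r', |g a r r'| ≤ Cg) :
    ∑ a : 𝒜, ∫ ω, m a (R ω) * μa a (R ω) (R' ω) * g a (R ω) (R' ω) ∂P
      = ∫ ω, Y ω * g (A ω) (R ω) (R' ω) ∂P := by
  have hARR' : Measurable fun ω => (A ω, R ω, R' ω) := hA.prodMk (hR.prodMk hR')
  have hRR' : Measurable fun ω => (R ω, R' ω) := hR.prodMk hR'
  have hg : Measurable fun p : 𝒜 × 𝓡 × 𝓡' => g p.1 p.2.1 p.2.2 :=
    measurable_from_prod_countable_right hg_meas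
  set F : 𝒜 → Ω → ℝ := fun a ω => m a (R ω) * g a (R ω) (R' ω) with hF
  have hF_int : Integrable (fun ω => F (A ω) ω) P :=
    (integrable_condExp.congr h_condY).mul_bdd (hg.comp hARR').aestronglyMeasurable
      (.of_forall fun ω => hg_bdd _ _ _)
  have hY : ∫ ω, Y ω * g (A ω) (R ω) (R' ω) ∂P = ∫ ω, F (A ω) ω ∂P :=
    integral_mul_of_condExp_ae_eq hARR'.comap_le
      (hg.comp (comap_measurable _)).stronglyMeasurable
      (hY_int.mul_bdd (hg.comp hARR').aestronglyMeasurable (.of_forall fun ω => hg_bdd _ _ _))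
      hY_int h_condY
  have hF_split : ∀ ω, F (A ω) ω = ∑ a, (if A ω = a then 1 else 0) * F a ω := fun ω => by
    simp only [Finset.sum_boole_mul, Finset.mem_univ, if_true]
  have hF_meas : ∀ a,
      StronglyMeasurable[MeasurableSpace.comap (fun ω => (R ω, R' ω)) inferInstance] (F a) :=
    fun a => ((((hm_meas a).comp measurable_fst).mul (hg_meas a)).comp
      (comap_measurable _)).stronglyMeasurable
  have h_term : ∀ a, ∫ ω, (if A ω = a then 1 else 0) * F a ω ∂P
      = ∫ ω, m a (R ω) * μa a (R ω) (R' ω) * g a (R ω) (R' ω) ∂P := fun a => by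
    rw [integral_mul_of_condExp_ae_eq hRR'.comap_le (hF_meas a)
      (integrable_boole_mul_of_integrable_diag hA hF_int a)
      ((integrable_const (1 : ℝ)).indicator (hA (measurableSet_singleton a))) (h_condA a)]
    exact integral_congr_ae (.of_forall fun ω => by simp only [hF]; ring)
  rw [hY, integral_congr_ae (.of_forall hF_split), integral_finsetSum _ fun a _ =>
    integrable_boole_mul_of_integrable_diag hA hF_int a]
  exact Finset.sum_congr rfl fun a _ => (h_term a).symm

/-- Lemma (identification / inverse-weighting identity): for every bounded measurable
`g : 𝒜 × 𝓡 × 𝓡' → ℝ`,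
`Σ_a E[m_a(R) μ_a(R,R') g(a,R,R')] = E[Y g(A,R,R')]`, where
`E[Y | σ(A,R,R')] = m_A(R)` a.s. and `E[1{A=a} | σ(R,R')] = μ_a(R,R')` a.s. -/
theorem stmt7 {Ω 𝒜 𝓡 𝓡' : Type*} [MeasurableSpace Ω]
    [Fintype 𝒜] [MeasurableSpace 𝒜] [MeasurableSingletonClass 𝒜]
    [MeasurableSpace 𝓡] [MeasurableSpace 𝓡']
    (P : Measure Ω) [IsProbabilityMeasure P]
    (A : Ω → 𝒜) (R : Ω → 𝓡) (R' : Ω → 𝓡') (Y : Ω → ℝ)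
    (hA : Measurable A) (hR : Measurable R) (hR' : Measurable R')
    (hY_int : Integrable Y P)
    (m : 𝒜 → 𝓡 → ℝ) (μa : 𝒜 → 𝓡 → 𝓡' → ℝ)
    (hm_meas : ∀ a, Measurable (m a))
    (hμ_meas : ∀ a, Measurable (fun q : 𝓡 × 𝓡' => μa a q.1 q.2))
    -- E[Y | σ(A,R,R')] = m_A(R) a.s. (this encodes E[Y|A,R] = m_A(R) together with
    -- conditional independence of Y and R' given (A,R))
    (h_condY : P[Y | MeasurableSpace.comap (fun ω => (A ω, R ω, R' ω)) inferInstance]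
        =ᵐ[P] fun ω => m (A ω) (R ω))
    -- E[1{A=a} | σ(R,R')] = μ_a(R,R') a.s.
    (h_condA : ∀ a : 𝒜,
        P[(fun ω => if A ω = a then (1 : ℝ) else 0) |
            MeasurableSpace.comap (fun ω => (R ω, R' ω)) inferInstance]
          =ᵐ[P] fun ω => μa a (R ω) (R' ω))
    -- a bounded measurable function g
    (g : 𝒜 → 𝓡 → 𝓡' → ℝ)
    (hg_meas : ∀ a, Measurable (fun q : 𝓡 × 𝓡' => g a q.1 q.2))
    (Cg : ℝ) (hg_bdd : ∀ a r r', |g a r r'| ≤ Cg) :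
    ∑ a : 𝒜, ∫ ω, m a (R ω) * μa a (R ω) (R' ω) * g a (R ω) (R' ω) ∂P
      = ∫ ω, Y ω * g (A ω) (R ω) (R' ω) ∂P :=
  stmt7_general P A R R' Y hA hR hR' hY_int m μa hm_meas h_condY h_condA g hg_meas Cg hg_bdd
end

section
/- There exist ε > 0 and a function c : (−ε, ε) → ℝ with c(0) = c₀ such that 1 − F_θ(c(θ)) = q for all θ ∈ (−ε, ε), c is differentiable at 0, and c'(0) = (∫_{c₀}^∞ s(r) f(r) dr) / f(c₀). (This identifies the influence of a marginal policy perturbation on the market-clearing cutoff in a price-based allocation: the representer of the derivative is ψ(r) = 1{r > c₀}/f(c₀).) -/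
/-!
Since `F_θ(x) = F₀(x) + θ S(x)` with `S(x) = ∫_{-∞}^x s f`, the market-clearing condition reads
`F₀(x) + θ S(x) = F₀(c₀)`. Its partial derivative in `x` at `(0, c₀)` is `f(c₀) ≠ 0`, so the
implicit function theorem gives a differentiable solution `c` with `c'(0) = -S(c₀)/f(c₀)`, and
`-S(c₀) = ∫_{c₀}^∞ s f` because `s f` integrates to zero.
-/

open MeasureTheory Set

theorem HasStrictDerivAt.exists_curve_add_mul_eq {F S : ℝ → ℝ} {x₀ F' S' : ℝ}
    (hF : HasStrictDerivAt F F' x₀) (hS : HasStrictDerivAt S S' x₀) (hF' : F' ≠ 0) :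
    ∃ ε > 0, ∃ c : ℝ → ℝ, c 0 = x₀ ∧ (∀ θ ∈ Ioo (-ε) ε, F (c θ) + θ * S (c θ) = F x₀) ∧
      HasDerivAt c (-S x₀ / F') 0 := by
  set G' : ℝ × ℝ →L[ℝ] ℝ := S x₀ • .fst ℝ ℝ ℝ + F' • .snd ℝ ℝ ℝ
  have hG : HasStrictFDerivAt (fun p : ℝ × ℝ => F p.2 + p.1 * S p.2) G' (0, x₀) := by
    have hSsnd : HasStrictFDerivAt (fun p : ℝ × ℝ => S p.2) _ (0, x₀) :=
      hS.hasStrictFDerivAt.comp _ hasStrictFDerivAt_snd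
    refine ((hF.hasStrictFDerivAt.comp _ hasStrictFDerivAt_snd).add
      (hasStrictFDerivAt_fst.mul hSsnd)).congr_fderiv ?_
    ext <;> simp [G']
  have hG'_inr : G' ∘L .inr ℝ ℝ ℝ =
      (ContinuousLinearEquiv.unitsEquivAut ℝ (.mk0 F' hF') : ℝ →L[ℝ] ℝ) := by
    ext; simp [G']
  have hinv : (G' ∘L .inr ℝ ℝ ℝ).IsInvertible := hG'_inr ▸ ⟨_, rfl⟩
  set c := hG.implicitFunctionOfProdDomain hinv
  have hc0 : c 0 = x₀ :=
    (hG.eventually_apply_eq_iff_implicitFunctionOfProdDomain hinv).self_of_nhds.mp rfl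
  obtain ⟨ε, hε, hsol⟩ := Metric.eventually_nhds_iff.mp
    (hG.eventually_apply_implicitFunctionOfProdDomain hinv)
  refine ⟨ε, hε, c, hc0, fun θ hθ => ?_, ?_⟩
  · simpa using hsol (show dist θ 0 < ε by rwa [Real.dist_eq, sub_zero, abs_lt])
  · refine (hG.hasStrictFDerivAt_implicitFunctionOfProdDomain hinv).hasFDerivAt.hasDerivAt
      |>.congr_deriv ?_
    rw [hG'_inr, ContinuousLinearMap.inverse_equiv]
    simp [G', div_eq_mul_inv]

theorem hasStrictDerivAt_integral_Iic {g : ℝ → ℝ} {a : ℝ} (hg : Integrable g)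
    (hga : ContinuousAt g a) : HasStrictDerivAt (fun x => ∫ r in Iic x, g r) (g a) a := by
  have hsplit : (fun x => ∫ r in Iic x, g r) = fun x => (∫ r in Iic a, g r) + ∫ r in a..x, g r := by
    funext x
    rw [← intervalIntegral.integral_Iic_sub_Iic hg.integrableOn hg.integrableOn]
    ring
  rw [hsplit]
  exact (intervalIntegral.integral_hasStrictDerivAt_right hg.intervalIntegrable
    hg.aestronglyMeasurable.stronglyMeasurableAtFilter hga).const_add _

theorem integral_mul_one_add_mul {α : Type*} [MeasurableSpace α] {μ : Measure α} {f s : α → ℝ}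
    (hf : Integrable f μ) (hsf : Integrable (fun r => s r * f r) μ) (θ : ℝ) :
    ∫ r, f r * (1 + θ * s r) ∂μ = ∫ r, f r ∂μ + θ * ∫ r, s r * f r ∂μ := by
  rw [← integral_const_mul, ← integral_add hf (hsf.const_mul θ)]
  congr 1 with r
  ring

theorem integral_Ioi_eq_neg_integral_Iic {g : ℝ → ℝ} (hg : Integrable g) (hg0 : ∫ r, g r = 0)
    (a : ℝ) : ∫ r in Ioi a, g r = -∫ r in Iic a, g r := by
  linarith [intervalIntegral.integral_Iic_add_Ioi (b := a) hg.integrableOn hg.integrableOn]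

theorem stmt11_general (f s : ℝ → ℝ)
    (hf_cont : Continuous f) (hf_prob : ∫ x, f x = 1)
    (hs_cont : Continuous s) (Ms : ℝ) (hs_bdd : ∀ x, |s x| ≤ Ms)
    (hs_mean : ∫ r, s r * f r = 0)
    (q : ℝ)
    (c₀ : ℝ) (hc₀ : 1 - (∫ r in Iic c₀, f r) = q)
    (hfc₀_pos : 0 < f c₀) :
    ∃ ε > (0 : ℝ), ∃ c : ℝ → ℝ, c 0 = c₀ ∧
      (∀ θ ∈ Ioo (-ε) ε, 1 - (∫ r in Iic (c θ), f r * (1 + θ * s r)) = q) ∧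
      HasDerivAt c ((∫ r in Ioi c₀, s r * f r) / f c₀) 0 := by
  have hf_int : Integrable f := .of_integral_ne_zero (by simp [hf_prob])
  have hsf_int : Integrable (fun r => s r * f r) :=
    hf_int.bdd_mul hs_cont.aestronglyMeasurable (.of_forall fun x => by simpa using hs_bdd x)
  obtain ⟨ε, hε, c, hc0, hc, hc_deriv⟩ :=
    (hasStrictDerivAt_integral_Iic hf_int hf_cont.continuousAt).exists_curve_add_mul_eq
      (hasStrictDerivAt_integral_Iic hsf_int (hs_cont.mul hf_cont).continuousAt) hfc₀_pos.ne'
  refine ⟨ε, hε, c, hc0, fun θ hθ => ?_, ?_⟩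
  · rw [integral_mul_one_add_mul hf_int.integrableOn hsf_int.integrableOn, hc θ hθ, hc₀]
  · rwa [integral_Ioi_eq_neg_integral_Iic hsf_int hs_mean]

/-- Price-based allocation: the market-clearing cutoff along the perturbed path
`F_θ(x) = ∫_{−∞}^x f(r)(1+θ s(r)) dr` exists locally, satisfies `1 − F_θ(c(θ)) = q`, and
is differentiable at `0` with `c'(0) = (∫_{c₀}^∞ s f)/f(c₀)`; i.e. the representer of the
derivative is `ψ(r) = 1{r > c₀}/f(c₀)`. -/
theorem stmt11 (f s : ℝ → ℝ)
    (hf_cont : Continuous f) (hf_nonneg : ∀ x, 0 ≤ f x) (hf_prob : ∫ x, f x = 1)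
    (hs_cont : Continuous s) (Ms : ℝ) (hs_bdd : ∀ x, |s x| ≤ Ms)
    (hs_mean : ∫ r, s r * f r = 0)
    (q : ℝ) (hq : q ∈ Ioo (0 : ℝ) 1)
    (c₀ : ℝ) (hc₀ : 1 - (∫ r in Iic c₀, f r) = q)
    (hfc₀_pos : 0 < f c₀) :
    ∃ ε > (0 : ℝ), ∃ c : ℝ → ℝ, c 0 = c₀ ∧
      (∀ θ ∈ Ioo (-ε) ε, 1 - (∫ r in Iic (c θ), f r * (1 + θ * s r)) = q) ∧
      HasDerivAt c ((∫ r in Ioi c₀, s r * f r) / f c₀) 0 :=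
  stmt11_general f s hf_cont hf_prob hs_cont Ms hs_bdd hs_mean q c₀ hc₀ hfc₀_pos
end
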